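/- Let X be a normal Hausdorff space, let F be a cusco map from X to ℝ whose value F(x) is a singleton at every isolated point x of X, and let W₁, …, Wₙ be open subsets of X × ℝ such that the graph of F is contained in W₁ ∪ … ∪ Wₙ and the graph of F meets each Wₖ. Then there exists a continuous function g : X → ℝ whose graph is contained in W₁ ∪ … ∪ Wₙ and meets each Wₖ. -/

import Mathlib

open Set Topology TopologicalSpace

/-- The set of values of a set-valued map (identified with its graph) at a point. -/
def valuesAt {X : Type*} (F : Set (X × ℝ)) (x : X) : Set ℝ := {y | (x, y) ∈ F}

/-- A set-valued map (identified with its graph) is cusco: upper semicontinuous at every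
point, with nonempty compact convex values. -/
def IsCusco {X : Type*} [TopologicalSpace X] (F : Set (X × ℝ)) : Prop :=
  (∀ x : X, ∀ V : Set ℝ, IsOpen V → valuesAt F x ⊆ V →
    ∃ U : Set X, IsOpen U ∧ x ∈ U ∧ ∀ u ∈ U, valuesAt F u ⊆ V) ∧
  (∀ x : X, (valuesAt F x).Nonempty ∧ IsCompact (valuesAt F x) ∧ Convex ℝ (valuesAt F x))

/-- A minimal cusco map, i.e. a cusco map containing no proper cusco submap. -/
def IsMinimalCusco {X : Type*} [TopologicalSpace X] (F : Set (X × ℝ)) : Prop :=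
  IsCusco F ∧ ∀ G : Set (X × ℝ), IsCusco G → G ⊆ F → G = F

/-- `L(X)`: all cusco maps from `X` to `ℝ`. -/
def LSet (X : Type*) [TopologicalSpace X] : Set (Set (X × ℝ)) := {F | IsCusco F}

/-- `L₀(X)`: cusco maps that are single-valued at each isolated point. -/
def L0Set (X : Type*) [TopologicalSpace X] : Set (Set (X × ℝ)) :=
  {F | IsCusco F ∧ ∀ x : X, IsOpen ({x} : Set X) → ∃ y : ℝ, valuesAt F x = {y}}

/-- `MC(X)`: all minimal cusco maps from `X` to `ℝ`. -/
def MCSet (X : Type*) [TopologicalSpace X] : Set (Set (X × ℝ)) := {F | IsMinimalCusco F}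

/-- The upper Vietoris topology on a family of subsets of `X × ℝ`. -/
def upperVietoris {X : Type*} [TopologicalSpace X] (S : Set (Set (X × ℝ))) :
    TopologicalSpace S :=
  .generateFrom {U | ∃ W : Set (X × ℝ), IsOpen W ∧ U = {A : S | (A : Set (X × ℝ)) ⊆ W}}

/-- The Vietoris topology on a family of subsets of `X × ℝ`. -/
def vietoris {X : Type*} [TopologicalSpace X] (S : Set (Set (X × ℝ))) :
    TopologicalSpace S :=
  .generateFrom
    ({U | ∃ W : Set (X × ℝ), IsOpen W ∧ U = {A : S | (A : Set (X × ℝ)) ⊆ W}} ∪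
     {U | ∃ W : Set (X × ℝ), IsOpen W ∧ U = {A : S | ((A : Set (X × ℝ)) ∩ W).Nonempty}})

/-- The graph of a function `X → ℝ`. -/
def graphOf {X : Type*} (f : X → ℝ) : Set (X × ℝ) := {p | p.2 = f p.1}

/-- `X` is countably compact: every countable open cover has a finite subcover. -/
def CountablyCompact (X : Type*) [TopologicalSpace X] : Prop :=
  ∀ U : ℕ → Set X, (∀ n, IsOpen (U n)) → (⋃ n, U n) = Set.univ →
    ∃ t : Finset ℕ, (⋃ n ∈ t, U n) = Set.univ

open Filter Function Real

/-!
Let `S ⊆ U := ⋃ Wₖ` be the set whose slice over `x` is the connected component of `U_x`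
containing `F(x) = [a x, b x]`; it is open by upper semicontinuity of `F` and the tube lemma.
With `ℝ` compressed by `arctan`, the lower edge `l` of `S` is upper and the upper edge `u` is
lower semicontinuous, and `l < a`, `b < u` with `a` lower and `b` upper semicontinuous.
The Katětov–Tong theorem inserts continuous `φ ∈ [l, a]` and `ψ ∈ [b, u]`, and `(φ + ψ) / 2`
lies strictly between `l` and `u`: this gives a continuous `g₀` with graph in `S`.
Finally `g₀` is bent by Urysohn bumps through one point of each `Wₖ ∩ S`; since the slices of
`S` are intervals the graph stays in `S`. The bump centres must be distinct: near a
non-isolated point there is room to move them, and over an isolated point `x` every `Wₖ` met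
by `F` is met at the single value of `F(x)`.
-/

section Insertion

variable {X : Type*} [TopologicalSpace X] [NormalSpace X] {f g : X → ℝ}

theorem UpperSemicontinuous.exists_continuous_approx_between (hf : UpperSemicontinuous f)
    (hg : LowerSemicontinuous g) (hfg : f ≤ g) {c : ℝ} (hc : 0 < c) (hfc : ∀ x, f x ≤ c)
    (hgc : ∀ x, -c ≤ g x) :
    ∃ h : X → ℝ, Continuous h ∧ (∀ x, |h x| ≤ c / 3) ∧
      ∀ x, f x - 2 / 3 * c ≤ h x ∧ h x ≤ g x + 2 / 3 * c := by
  have hd : Disjoint (f ⁻¹' Ici (c / 3)) (g ⁻¹' Iic (-(c / 3))) :=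
    disjoint_left.2 fun x (hfx : c / 3 ≤ f x) (hgx : g x ≤ -(c / 3)) => by linarith [hfg x]
  obtain ⟨φ, hφf, hφg, hφI⟩ := exists_continuous_zero_one_of_isClosed
    (hf.isClosed_preimage _) (hg.isClosed_preimage _) hd
  refine ⟨fun x => c / 3 - 2 * c / 3 * φ x, by fun_prop, fun x => ?_, fun x => ⟨?_, ?_⟩⟩
  · obtain ⟨h0, h1⟩ := hφI x
    rw [abs_le]
    constructor <;> nlinarith
  · by_cases hx : c / 3 ≤ f x
    · simp only [hφf hx, Pi.zero_apply]
      linarith [hfc x]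
    · nlinarith [(hφI x).2]
  · by_cases hx : g x ≤ -(c / 3)
    · simp only [hφg hx, Pi.one_apply]
      linarith [hgc x]
    · nlinarith [(hφI x).1]

theorem UpperSemicontinuous.exists_continuous_approx_step (hf : UpperSemicontinuous f)
    (hg : LowerSemicontinuous g) (hfg : f ≤ g) {c : ℝ} (hc : 0 < c) {s : X → ℝ}
    (hs : Continuous s) (hsc : ∀ x, f x - c ≤ s x ∧ s x ≤ g x + c) :
    ∃ s' : X → ℝ, Continuous s' ∧ (∀ x, dist (s x) (s' x) ≤ c / 3) ∧
      ∀ x, f x - 2 / 3 * c ≤ s' x ∧ s' x ≤ g x + 2 / 3 * c := by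
  obtain ⟨h, hh, hhc, hfgh⟩ := (hf.add hs.neg.upperSemicontinuous).exists_continuous_approx_between
    (hg.add hs.neg.lowerSemicontinuous) (fun x => by simpa using hfg x) hc
    (fun x => show f x + -s x ≤ c by linarith [(hsc x).1])
    (fun x => show -c ≤ g x + -s x by linarith [(hsc x).2])
  refine ⟨s + h, hs.add hh, fun x => by simpa [Real.dist_eq, abs_sub_comm] using hhc x,
    fun x => ⟨?_, ?_⟩⟩ <;> simp only [Pi.add_apply, Pi.neg_apply] at hfgh ⊢ <;>
    linarith [hfgh x]

/-- The Katětov–Tong insertion theorem, for bounded functions. -/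
theorem UpperSemicontinuous.exists_continuous_between (hf : UpperSemicontinuous f)
    (hg : LowerSemicontinuous g) (hfg : f ≤ g) (hf_bdd : BddAbove (range f))
    (hg_bdd : BddBelow (range g)) : ∃ h : X → ℝ, Continuous h ∧ f ≤ h ∧ h ≤ g := by
  obtain ⟨C, hC, hfC, hgC⟩ : ∃ C : ℝ, 0 < C ∧ (∀ x, f x ≤ C) ∧ ∀ x, -C ≤ g x := by
    obtain ⟨C₁, hC₁⟩ := hf_bdd
    obtain ⟨C₂, hC₂⟩ := hg_bdd
    refine ⟨max (max C₁ (-C₂)) 1, by positivity, fun x => ?_, fun x => ?_⟩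
    · linarith [hC₁ (mem_range_self x), le_max_left C₁ (-C₂), le_max_left (max C₁ (-C₂)) 1]
    · linarith [hC₂ (mem_range_self x), le_max_right C₁ (-C₂), le_max_left (max C₁ (-C₂)) 1]
  choose! next hnext_cont hnext_dist hnext_approx using
    fun (c : ℝ) (s : X → ℝ) (hc : 0 < c) (hs : Continuous s) =>
      hf.exists_continuous_approx_step hg hfg hc hs
  set c : ℕ → ℝ := fun n => C * (2 / 3) ^ n
  have hc_pos n : 0 < c n := by positivity
  let s : ℕ → X → ℝ := fun n => Nat.rec 0 (fun k sk => next (c k) sk) n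
  have hs n : Continuous (s n) ∧ ∀ x, f x - c n ≤ s n x ∧ s n x ≤ g x + c n := by
    induction n with
    | zero =>
      refine ⟨continuous_const, fun x => ?_⟩
      show f x - C * (2 / 3) ^ 0 ≤ 0 ∧ 0 ≤ g x + C * (2 / 3) ^ 0
      constructor <;> linarith [hfC x, hgC x, pow_zero (2 / 3 : ℝ)]
    | succ n ih =>
      have hcn : c (n + 1) = 2 / 3 * c n := by simp only [c, pow_succ]; ring
      exact ⟨hnext_cont _ _ (hc_pos n) ih.1 ih.2, hcn ▸ hnext_approx _ _ (hc_pos n) ih.1 ih.2⟩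
  have hdist x n : dist (s n x) (s (n + 1) x) ≤ C / 3 * (2 / 3) ^ n :=
    (hnext_dist _ _ (hc_pos n) (hs n).1 (hs n).2 x).trans_eq (by ring)
  choose h hlim using fun x => cauchySeq_tendsto_of_complete
    (cauchySeq_of_le_geometric _ _ (by norm_num) (hdist x))
  have hclose x n : dist (s n x) (h x) ≤ c n :=
    (dist_le_of_le_geometric_of_tendsto _ _ (by norm_num) (hdist x) (hlim x) n).trans_eq
      (by ring)
  have hc0 : Tendsto c atTop (𝓝 0) := by
    simpa using (tendsto_pow_atTop_nhds_zero_of_lt_one (by norm_num : (0 : ℝ) ≤ 2 / 3)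
      (by norm_num)).const_mul C
  have hunif : TendstoUniformly s h atTop := Metric.tendstoUniformly_iff.2 fun ε hε => by
    filter_upwards [hc0.eventually (gt_mem_nhds hε)] with n hn x
    exact (dist_comm (h x) _ ▸ hclose x n).trans_lt hn
  refine ⟨h, hunif.continuous (Frequently.of_forall fun n => (hs n).1), fun x => ?_, fun x => ?_⟩
  · exact ge_of_tendsto' (by simpa using (hlim x).add hc0) fun n => by linarith [((hs n).2 x).1]
  · exact le_of_tendsto' (by simpa using (hlim x).sub hc0) fun n => by linarith [((hs n).2 x).2]

end Insertion

section Selection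

theorem IsOpen.csInf_image_lt {A : Set ℝ} (hA : IsOpen A) {t : ℝ → ℝ} (ht : StrictMono t)
    (ht_bdd : BddBelow (range t)) {y : ℝ} (hy : y ∈ A) : sInf (t '' A) < t y := by
  obtain ⟨y', hy'y, hy'A⟩ := Filter.Eventually.exists_lt (hA.mem_nhds hy)
  exact (csInf_le (ht_bdd.mono (image_subset_range _ _)) (mem_image_of_mem t hy'A)).trans_lt
    (ht hy'y)

theorem IsOpen.lt_csSup_image {A : Set ℝ} (hA : IsOpen A) {t : ℝ → ℝ} (ht : StrictMono t)
    (ht_bdd : BddAbove (range t)) {y : ℝ} (hy : y ∈ A) : t y < sSup (t '' A) := by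
  obtain ⟨y', hy'y, hy'A⟩ := Filter.Eventually.exists_gt (hA.mem_nhds hy)
  exact (ht hy'y).trans_le
    (le_csSup (ht_bdd.mono (image_subset_range _ _)) (mem_image_of_mem t hy'A))

theorem Set.OrdConnected.tan_mem_of_mem_Ioo {A : Set ℝ} (hA : A.OrdConnected) (hne : A.Nonempty)
    {z : ℝ} (hz : z ∈ Ioo (sInf (arctan '' A)) (sSup (arctan '' A))) :
    z ∈ Ioo (-(π / 2)) (π / 2) ∧ tan z ∈ A := by
  obtain ⟨_, ⟨s₁, hs₁, rfl⟩, h₁⟩ := exists_lt_of_csInf_lt (hne.image arctan) hz.1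
  obtain ⟨_, ⟨s₂, hs₂, rfl⟩, h₂⟩ := exists_lt_of_lt_csSup (hne.image arctan) hz.2
  have hz' : z ∈ Ioo (-(π / 2)) (π / 2) :=
    ⟨(neg_pi_div_two_lt_arctan _).trans h₁, h₂.trans (arctan_lt_pi_div_two _)⟩
  refine ⟨hz', hA.out hs₁ hs₂ ⟨?_, ?_⟩⟩ <;>
    rw [← arctan_strictMono.le_iff_le, arctan_tan hz'.1 hz'.2]
  exacts [h₁.le, h₂.le]

variable {X : Type*} [TopologicalSpace X] {S : Set (X × ℝ)}

theorem isOpen_valuesAt (hS : IsOpen S) (x : X) : IsOpen (valuesAt S x) :=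
  hS.preimage (Continuous.prodMk_right x)

theorem upperSemicontinuous_csInf_image_valuesAt (hS : IsOpen S)
    (hne : ∀ x, (valuesAt S x).Nonempty) {t : ℝ → ℝ} (ht_bdd : BddBelow (range t)) :
    UpperSemicontinuous fun x => sInf (t '' valuesAt S x) := by
  intro x₀ y hy
  obtain ⟨_, ⟨s, hs, rfl⟩, hsy⟩ := exists_lt_of_csInf_lt ((hne x₀).image t) hy
  filter_upwards [(Continuous.prodMk_left s).continuousAt.preimage_mem_nhds (hS.mem_nhds hs)]
    with x hx
  exact (csInf_le (ht_bdd.mono (image_subset_range _ _)) (mem_image_of_mem t hx)).trans_lt hsy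

theorem lowerSemicontinuous_csSup_image_valuesAt (hS : IsOpen S)
    (hne : ∀ x, (valuesAt S x).Nonempty) {t : ℝ → ℝ} (ht_bdd : BddAbove (range t)) :
    LowerSemicontinuous fun x => sSup (t '' valuesAt S x) := by
  intro x₀ y hy
  obtain ⟨_, ⟨s, hs, rfl⟩, hsy⟩ := exists_lt_of_lt_csSup ((hne x₀).image t) hy
  filter_upwards [(Continuous.prodMk_left s).continuousAt.preimage_mem_nhds (hS.mem_nhds hs)]
    with x hx
  exact hsy.trans_le (le_csSup (ht_bdd.mono (image_subset_range _ _)) (mem_image_of_mem t hx))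

theorem exists_continuous_forall_mem_of_semicontinuous [NormalSpace X] (hS : IsOpen S)
    (hconn : ∀ x, (valuesAt S x).OrdConnected) {a b : X → ℝ} (ha : LowerSemicontinuous a)
    (hb : UpperSemicontinuous b) (haS : ∀ x, (x, a x) ∈ S) (hbS : ∀ x, (x, b x) ∈ S) :
    ∃ g : X → ℝ, Continuous g ∧ ∀ x, (x, g x) ∈ S := by
  have hne x : (valuesAt S x).Nonempty := ⟨a x, haS x⟩
  have hlo y : -(π / 2) ≤ arctan y := (neg_pi_div_two_lt_arctan y).le
  have hhi y : arctan y ≤ π / 2 := (arctan_lt_pi_div_two y).le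
  have hbddB : BddBelow (range arctan) := ⟨_, forall_mem_range.2 hlo⟩
  have hbddA : BddAbove (range arctan) := ⟨_, forall_mem_range.2 hhi⟩
  set l := fun x => sInf (arctan '' valuesAt S x)
  set u := fun x => sSup (arctan '' valuesAt S x)
  have hla x : l x ≤ arctan (a x) :=
    csInf_le (hbddB.mono (image_subset_range _ _)) (mem_image_of_mem _ (haS x))
  have hlb x : l x < arctan (b x) :=
    (isOpen_valuesAt hS x).csInf_image_lt arctan_strictMono hbddB (hbS x)
  have hau x : arctan (a x) < u x :=
    (isOpen_valuesAt hS x).lt_csSup_image arctan_strictMono hbddA (haS x)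
  have hbu x : arctan (b x) ≤ u x :=
    le_csSup (hbddA.mono (image_subset_range _ _)) (mem_image_of_mem _ (hbS x))
  obtain ⟨φ, hφ, hlφ, hφa⟩ :=
    (upperSemicontinuous_csInf_image_valuesAt hS hne hbddB).exists_continuous_between
      (continuous_arctan.comp_lowerSemicontinuous ha arctan_strictMono.monotone) hla
      ⟨_, forall_mem_range.2 fun x => (hla x).trans (hhi _)⟩
      ⟨_, forall_mem_range.2 fun x => hlo (a x)⟩
  obtain ⟨ψ, hψ, hbψ, hψu⟩ := (continuous_arctan.comp_upperSemicontinuous hb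
    arctan_strictMono.monotone).exists_continuous_between
    (lowerSemicontinuous_csSup_image_valuesAt hS hne hbddA) hbu
    ⟨_, forall_mem_range.2 fun x => hhi (b x)⟩
    ⟨_, forall_mem_range.2 fun x => (hlo _).trans (hbu x)⟩
  have hmid x : (φ x + ψ x) / 2 ∈ Ioo (l x) (u x) :=
    ⟨by linarith [show l x ≤ φ x from hlφ x, show arctan (b x) ≤ ψ x from hbψ x, hlb x],
      by linarith [show φ x ≤ arctan (a x) from hφa x, show ψ x ≤ u x from hψu x, hau x]⟩
  have htan x := (hconn x).tan_mem_of_mem_Ioo (hne x) (hmid x)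
  exact ⟨fun x => tan ((φ x + ψ x) / 2),
    continuousOn_tan_Ioo.comp_continuous (by fun_prop) fun x => (htan x).1, fun x => (htan x).2⟩

end Selection

section Interpolation

variable {X : Type*} [TopologicalSpace X] [T1Space X] [NormalSpace X] {S : Set (X × ℝ)}

theorem exists_continuous_forall_mem_update (hS : IsOpen S)
    (hconn : ∀ x, (valuesAt S x).OrdConnected) {g : X → ℝ} (hg : Continuous g)
    (hgS : ∀ x, (x, g x) ∈ S) {C : Set X} (hC : IsClosed C) {q : X × ℝ} (hqS : q ∈ S)
    (hqC : q.1 ∉ C) :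
    ∃ g' : X → ℝ, Continuous g' ∧ (∀ x, (x, g' x) ∈ S) ∧ g' q.1 = q.2 ∧ EqOn g' g C := by
  set d := q.2 - g q.1
  set N := {x | (x, g x + d) ∈ S} \ C
  have hN : IsOpen N := (hS.preimage (by fun_prop)).sdiff hC
  have hqN : q.1 ∈ N := ⟨by simpa [d] using hqS, hqC⟩
  obtain ⟨θ, hθN, hθq, hθI⟩ := exists_continuous_zero_one_of_isClosed hN.isClosed_compl
    isClosed_singleton (disjoint_singleton_right.2 (not_not.2 hqN))
  refine ⟨fun x => g x + θ x * d, by fun_prop, fun x => ?_, by simp [hθq rfl, d],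
    fun x hx => by simp [hθN fun h => h.2 hx]⟩
  by_cases hx : x ∈ N
  · exact (hconn x).convex.add_smul_mem (hgS x) hx.1 (hθI x)
  · simpa [hθN hx] using hgS x

theorem exists_continuous_forall_mem_interpolating (hS : IsOpen S)
    (hconn : ∀ x, (valuesAt S x).OrdConnected) {g₀ : X → ℝ} (hg₀ : Continuous g₀)
    (hg₀S : ∀ x, (x, g₀ x) ∈ S) {ι : Type*} (s : Finset ι) (q : ι → X × ℝ)
    (hqS : ∀ i ∈ s, q i ∈ S) (hq : ∀ i ∈ s, ∀ j ∈ s, (q i).1 = (q j).1 → (q i).2 = (q j).2) :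
    ∃ g : X → ℝ, Continuous g ∧ (∀ x, (x, g x) ∈ S) ∧ ∀ i ∈ s, g (q i).1 = (q i).2 := by
  classical
  induction s using Finset.induction_on with
  | empty => exact ⟨g₀, hg₀, hg₀S, by simp⟩
  | insert k s hk ih =>
    obtain ⟨g, hg, hgS, hgq⟩ := ih (fun i hi => hqS i (Finset.mem_insert_of_mem hi))
      fun i hi j hj => hq i (Finset.mem_insert_of_mem hi) j (Finset.mem_insert_of_mem hj)
    by_cases hks : ∃ j ∈ s, (q j).1 = (q k).1
    · obtain ⟨j, hj, hjk⟩ := hks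
      refine ⟨g, hg, hgS, (Finset.forall_mem_insert _ _ _).2 ⟨?_, hgq⟩⟩
      rw [← hjk, hgq j hj, hq j (Finset.mem_insert_of_mem hj) k (Finset.mem_insert_self k s) hjk]
    · obtain ⟨g', hg', hg'S, hg'k, hg'g⟩ := exists_continuous_forall_mem_update hS hconn hg hgS
        (s.finite_toSet.image fun i => (q i).1).isClosed (hqS k (Finset.mem_insert_self k s))
        fun ⟨j, hj, hjk⟩ => hks ⟨j, hj, hjk⟩
      refine ⟨g', hg', hg'S, (Finset.forall_mem_insert _ _ _).2 ⟨hg'k, fun i hi => ?_⟩⟩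
      rw [hg'g (mem_image_of_mem _ hi), hgq i hi]

end Interpolation

theorem exists_injective_forall_mem_of_infinite {ι α : Type*} [Finite ι] {N : ι → Set α}
    (hN : ∀ i, (N i).Infinite) : ∃ f : ι → α, Injective f ∧ ∀ i, f i ∈ N i := by
  classical
  have := Fintype.ofFinite ι
  choose t ht hcard using fun i => (hN i).exists_subset_card_eq (Fintype.card ι)
  -- Hall's condition holds because each `t i` alone has as many elements as `ι`.
  obtain ⟨f, hf, hft⟩ := (Finset.all_card_le_biUnion_card_iff_exists_injective t).1 fun s => by
    rcases s.eq_empty_or_nonempty with rfl | ⟨i, hi⟩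
    · simp
    · calc s.card ≤ Fintype.card ι := s.card_le_univ
        _ = (t i).card := (hcard i).symm
        _ ≤ (s.biUnion t).card := Finset.card_le_card (Finset.subset_biUnion_of_mem t hi)
  exact ⟨f, hf, fun i => ht i (hft i)⟩

theorem exists_consistent_forall_mem {X ι : Type*} [TopologicalSpace X] [T1Space X] [Finite ι]
    {T : ι → Set (X × ℝ)} (hT : ∀ i, IsOpen (T i)) (p : ι → X × ℝ) (hpT : ∀ i, p i ∈ T i)
    (hp : ∀ i j, IsOpen {(p i).1} → (p i).1 = (p j).1 → (p i).2 = (p j).2) :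
    ∃ q : ι → X × ℝ, (∀ i, q i ∈ T i) ∧ ∀ i j, (q i).1 = (q j).1 → (q i).2 = (q j).2 := by
  classical
  set A := range fun i => (p i).1
  have hN (j : {i // ¬IsOpen {(p i).1}}) : (Prod.fst '' T j \ A).Infinite := by
    have : NeBot (𝓝[≠] (p j).1) := ⟨mt (isOpen_singleton_iff_punctured_nhds _).2 j.2⟩
    exact (infinite_of_mem_nhds _ ((isOpenMap_fst _ (hT j)).mem_nhds
      (mem_image_of_mem _ (hpT j)))).sdiff (finite_range _)
  obtain ⟨w, hw, hwN⟩ := exists_injective_forall_mem_of_infinite hN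
  choose r hrT hrw using fun j => (hwN j).1
  refine ⟨fun i => if h : IsOpen {(p i).1} then p i else r ⟨i, h⟩, fun i => ?_, fun i j => ?_⟩
  · dsimp only
    split_ifs with h
    exacts [hpT i, hrT ⟨i, h⟩]
  · have hwA (k) (hk : ¬IsOpen {(p k).1}) : (r ⟨k, hk⟩).1 ∉ A := hrw ⟨k, hk⟩ ▸ (hwN _).2
    dsimp only
    split_ifs with hi hj hj
    · exact hp i j hi
    · exact fun h => (hwA j hj (h ▸ mem_range_self i)).elim
    · exact fun h => (hwA i hi (h ▸ mem_range_self j)).elim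
    · intro h
      rw [hrw, hrw] at h
      obtain rfl : i = j := congrArg Subtype.val (hw h)
      rfl

/-- For a cusco `F ⊆ U`, the slice over `x` is the connected component of `valuesAt U x`
containing the interval `valuesAt F x`. -/
def sliceComponent {X : Type*} (F U : Set (X × ℝ)) : Set (X × ℝ) :=
  {p | p.2 ∈ connectedComponentIn (valuesAt U p.1) (sInf (valuesAt F p.1))}

section SliceComponent

variable {X : Type*} {F U : Set (X × ℝ)}

theorem valuesAt_sliceComponent (x : X) : valuesAt (sliceComponent F U) x =
    connectedComponentIn (valuesAt U x) (sInf (valuesAt F x)) :=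
  rfl

theorem ordConnected_valuesAt_sliceComponent [TopologicalSpace X] (x : X) :
    (valuesAt (sliceComponent F U) x).OrdConnected := by
  rw [valuesAt_sliceComponent]
  exact isPreconnected_connectedComponentIn.ordConnected

theorem sliceComponent_subset : sliceComponent F U ⊆ U :=
  fun p hp => (connectedComponentIn_subset (valuesAt U p.1) _ hp : p.2 ∈ valuesAt U p.1)

namespace IsCusco

variable [TopologicalSpace X]

theorem sInf_mem (hF : IsCusco F) (x : X) : sInf (valuesAt F x) ∈ valuesAt F x :=
  (hF.2 x).2.1.sInf_mem (hF.2 x).1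

theorem sSup_mem (hF : IsCusco F) (x : X) : sSup (valuesAt F x) ∈ valuesAt F x :=
  (hF.2 x).2.1.sSup_mem (hF.2 x).1

theorem lowerSemicontinuous_sInf (hF : IsCusco F) :
    LowerSemicontinuous fun x => sInf (valuesAt F x) := by
  intro x₀ y hy
  obtain ⟨O, hO, hx₀O, hFO⟩ := hF.1 x₀ (Ioi y) isOpen_Ioi fun z hz =>
    hy.trans_le (csInf_le (hF.2 x₀).2.1.bddBelow hz)
  filter_upwards [hO.mem_nhds hx₀O] with x hx using hFO x hx (hF.sInf_mem x)

theorem upperSemicontinuous_sSup (hF : IsCusco F) :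
    UpperSemicontinuous fun x => sSup (valuesAt F x) := by
  intro x₀ y hy
  obtain ⟨O, hO, hx₀O, hFO⟩ := hF.1 x₀ (Iio y) isOpen_Iio fun z hz =>
    (le_csSup (hF.2 x₀).2.1.bddAbove hz).trans_lt hy
  filter_upwards [hO.mem_nhds hx₀O] with x hx using hFO x hx (hF.sSup_mem x)

theorem valuesAt_subset_connectedComponentIn (hF : IsCusco F) {x : X} {V : Set ℝ}
    (hFV : valuesAt F x ⊆ V) :
    valuesAt F x ⊆ connectedComponentIn V (sInf (valuesAt F x)) :=
  (hF.2 x).2.2.isPreconnected.subset_connectedComponentIn (hF.sInf_mem x) hFV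

theorem subset_sliceComponent (hF : IsCusco F) (hFU : F ⊆ U) : F ⊆ sliceComponent F U :=
  fun _ hp => hF.valuesAt_subset_connectedComponentIn (fun _ hy => hFU hy) hp

theorem isOpen_sliceComponent (hF : IsCusco F) (hU : IsOpen U) (hFU : F ⊆ U) :
    IsOpen (sliceComponent F U) := by
  rw [isOpen_iff_mem_nhds]
  rintro ⟨x₀, y₀⟩ (hy₀ : y₀ ∈ connectedComponentIn _ _)
  set C := connectedComponentIn (valuesAt U x₀) (sInf (valuesAt F x₀))
  have hFC : valuesAt F x₀ ⊆ C := hF.valuesAt_subset_connectedComponentIn fun _ hy => hFU hy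
  set K := Icc (min y₀ (sInf (valuesAt F x₀))) (max y₀ (sSup (valuesAt F x₀)))
  have hy₀K : y₀ ∈ K := ⟨min_le_left _ _, le_max_left _ _⟩
  have hFK : valuesAt F x₀ ⊆ K := fun y hy =>
    ⟨(min_le_right _ _).trans (csInf_le (hF.2 x₀).2.1.bddBelow hy),
      (le_csSup (hF.2 x₀).2.1.bddAbove hy).trans (le_max_right _ _)⟩
  have hKC : K ⊆ C := by
    refine isPreconnected_connectedComponentIn.ordConnected.out ?_ ?_
    · rcases min_choice y₀ (sInf (valuesAt F x₀)) with h | h <;> rw [h]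
      exacts [hy₀, hFC (hF.sInf_mem x₀)]
    · rcases max_choice y₀ (sSup (valuesAt F x₀)) with h | h <;> rw [h]
      exacts [hy₀, hFC (hF.sSup_mem x₀)]
  -- For `(x, y)` near `(x₀, y₀)`, the connected open set `V₀ ⊇ K` joins `y` to `F x` in `U_x`.
  obtain ⟨O, V, hO, hV, hx₀O, hKV, hOV⟩ :=
    generalized_tube_lemma (isCompact_singleton (x := x₀)) isCompact_Icc hU
      fun p ⟨(hp : p.1 = x₀), hpK⟩ =>
        (hp ▸ connectedComponentIn_subset _ _ (hKC hpK) : p.2 ∈ valuesAt U p.1)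
  set V₀ := connectedComponentIn V y₀
  have hKV₀ : K ⊆ V₀ := isPreconnected_Icc.subset_connectedComponentIn hy₀K hKV
  obtain ⟨O', hO', hx₀O', hFO'⟩ := hF.1 x₀ V₀ hV.connectedComponentIn (hFK.trans hKV₀)
  filter_upwards [prod_mem_nhds ((hO.inter hO').mem_nhds ⟨hx₀O rfl, hx₀O'⟩)
    (hV.connectedComponentIn.mem_nhds (hKV₀ hy₀K))]
  rintro ⟨x, y⟩ ⟨⟨hxO, hxO'⟩, hy⟩
  exact isPreconnected_connectedComponentIn.subset_connectedComponentIn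
    (hFO' x hxO' (hF.sInf_mem x))
    (fun z hz => show (x, z) ∈ U from
      hOV (mk_mem_prod hxO (connectedComponentIn_subset V y₀ hz))) hy

end IsCusco

end SliceComponent

/-- If `X` is normal Hausdorff, `F` is cusco and single-valued at isolated points, and
`W₁, …, Wₙ` are open sets with `graph F ⊆ ⋃ Wₖ` and `graph F` meeting each `Wₖ`, then
some continuous `g : X → ℝ` has graph contained in `⋃ Wₖ` and meeting each `Wₖ`. -/
theorem exists_continuous_in_vietoris_basic {X : Type*} [TopologicalSpace X] [T2Space X]
    [NormalSpace X] (F : Set (X × ℝ)) (hF : IsCusco F)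
    (hiso : ∀ x : X, IsOpen ({x} : Set X) → ∃ y : ℝ, valuesAt F x = {y})
    (n : ℕ) (W : Fin n → Set (X × ℝ)) (hW : ∀ k, IsOpen (W k))
    (hsub : F ⊆ ⋃ k, W k) (hmeet : ∀ k, (F ∩ W k).Nonempty) :
    ∃ g : X → ℝ, Continuous g ∧ graphOf g ⊆ ⋃ k, W k ∧
      ∀ k, (graphOf g ∩ W k).Nonempty := by
  set S := sliceComponent F (⋃ k, W k)
  have hS : IsOpen S := hF.isOpen_sliceComponent (isOpen_iUnion hW) hsub
  have hFS : F ⊆ S := hF.subset_sliceComponent hsub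
  obtain ⟨g₀, hg₀, hg₀S⟩ := exists_continuous_forall_mem_of_semicontinuous hS
    ordConnected_valuesAt_sliceComponent hF.lowerSemicontinuous_sInf hF.upperSemicontinuous_sSup
    (fun x => hFS (hF.sInf_mem x)) (fun x => hFS (hF.sSup_mem x))
  choose p hpF hpW using hmeet
  obtain ⟨q, hqWS, hq⟩ := exists_consistent_forall_mem (T := fun k => W k ∩ S)
    (fun k => (hW k).inter hS) p (fun k => ⟨hpW k, hFS (hpF k)⟩) fun i j hi hij => by
      obtain ⟨y, hy⟩ := hiso _ hi
      have hi' : (p i).2 ∈ valuesAt F (p i).1 := hpF i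
      have hj' : (p j).2 ∈ valuesAt F (p i).1 := hij ▸ hpF j
      rw [hy] at hi' hj'
      exact hi'.trans hj'.symm
  obtain ⟨g, hg, hgS, hgq⟩ := exists_continuous_forall_mem_interpolating hS
    ordConnected_valuesAt_sliceComponent hg₀ hg₀S Finset.univ q (fun k _ => (hqWS k).2)
    fun i _ j _ => hq i j
  refine ⟨g, hg, fun r (hr : r.2 = g r.1) => ?_, fun k => ⟨q k, ?_, (hqWS k).1⟩⟩
  · exact sliceComponent_subset (hr ▸ hgS r.1)
  · exact (hgq k (Finset.mem_univ k)).symm
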